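/- Let H be a real Hilbert space, r > 0, and let S be a finite nonempty subset of the sphere {x ∈ H : ‖x‖ = r}. Define Ψ(y) := −min_{x∈S} ‖y−x‖²/2 and, for y ∈ H, the local (Fréchet) subdifferential ∂Ψ(y) := {ζ ∈ H : liminf_{y'→y} (Ψ(y') − Ψ(y) − ⟨ζ, y'−y⟩)/‖y'−y‖ ≥ 0}. Let Proj_S(y) := {x ∈ S : ‖y−x‖ = min_{x'∈S} ‖y−x'‖}. Then ∂Ψ(y) = {z − y : z ∈ conv(Proj_S(y))}, and the unique element of minimal norm of ∂Ψ(y) is p − y, where p is the unique point of the convex hull conv(Proj_S(y)) closest to y. -/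

import Mathlib

open scoped Classical RealInnerProductSpace

noncomputable section

variable {H : Type*} [NormedAddCommGroup H] [InnerProductSpace ℝ H]

/-- `dist(y,S) = min_{x∈S} ‖y−x‖` (as the infimum of a finite nonempty set of reals). -/
def distS (S : Finset H) (y : H) : ℝ :=
  sInf ((fun x => ‖y - x‖) '' ↑S)

/-- `Proj_S(y)`, the set of closest points of `S` to `y`. -/
def ProjS (S : Finset H) (y : H) : Finset H :=
  S.filter fun x => ‖y - x‖ = distS S y

/-- `Ψ(y) = −min_{x∈S} ‖y−x‖²/2`. -/
def PsiFn (S : Finset H) (y : H) : ℝ :=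
  -sInf ((fun x => ‖y - x‖ ^ 2 / 2) '' ↑S)

/-- The local (Fréchet) subdifferential of `Ψ` at `y`:
`∂Ψ(y) = {ζ : liminf_{y'→y} (Ψ(y') − Ψ(y) − ⟪ζ, y'−y⟫)/‖y'−y‖ ≥ 0}`. -/
def subdiff (S : Finset H) (y : H) : Set H :=
  {ζ : H | 0 ≤ Filter.liminf
      (fun y' => (PsiFn S y' - PsiFn S y - ⟪ζ, y' - y⟫) / ‖y' - y‖)
      (nhdsWithin y {y}ᶜ)}

/-!
Near `y` only the closest points are active: for `y'` close to `y`,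
`Ψ(y') = Ψ(y) + max_{x ∈ Proj_S(y)} ⟪x − y, y' − y⟫ − ‖y' − y‖²/2`, and `≥` holds for all `y'`.
A linear functional is not larger on `conv(Proj_S(y))` than on `Proj_S(y)`, so every `z − y` with
`z` in the hull is a subgradient. Conversely, if `y + ζ` lies outside the hull, the direction `d`
from its projection onto the hull to it has `⟪x − y − ζ, d⟫ ≤ −‖d‖²` for every closest point `x`,
and along `y + t d` the difference quotient stays below `−‖d‖`. The minimal-norm statement is
uniqueness of the nearest point of a convex set in a strictly convex space.
-/

open Filter Topology

theorem norm_sub_sq_eq_norm_sub_sq_sub_inner (x y y' : H) :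
    ‖y' - x‖ ^ 2 = ‖y - x‖ ^ 2 - 2 * ⟪x - y, y' - y⟫ + ‖y' - y‖ ^ 2 := by
  rw [show y' - x = (y' - y) - (x - y) by abel, norm_sub_sq_real, real_inner_comm,
    norm_sub_rev x y]
  ring

theorem Convex.exists_ne_zero_inner_sub_le_neg_norm_sq {K : Set H} (hne : K.Nonempty)
    (hK : IsComplete K) (hconv : Convex ℝ K) {u : H} (hu : u ∉ K) :
    ∃ d ≠ 0, ∀ x ∈ K, ⟪x - u, d⟫ ≤ -‖d‖ ^ 2 := by
  obtain ⟨v, hvK, hv⟩ := exists_norm_eq_iInf_of_complete_convex hne hK hconv u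
  have hproj := (norm_eq_iInf_iff_real_inner_le_zero hconv hvK).1 hv
  refine ⟨u - v, sub_ne_zero.2 fun h => hu (h ▸ hvK), fun x hx => ?_⟩
  have hsplit : ⟪x - u, u - v⟫ = ⟪u - v, x - v⟫ - ‖u - v‖ ^ 2 := by
    rw [show x - u = (x - v) - (u - v) by abel, inner_sub_left, real_inner_self_eq_norm_sq,
      real_inner_comm]
  linarith [hproj x hx]

theorem Convex.eq_of_isMinOn_norm_sub {E : Type*} [NormedAddCommGroup E] [NormedSpace ℝ E]
    [StrictConvexSpace ℝ E] {K : Set E} (hK : Convex ℝ K) {y p z : E} (hp : p ∈ K)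
    (hmin : IsMinOn (fun w => ‖y - w‖) K p) (hz : z ∈ K) (heq : ‖y - z‖ = ‖y - p‖) : z = p := by
  by_contra hne
  have hmid : (1 / 2 : ℝ) • p + (1 / 2 : ℝ) • z ∈ K :=
    hK hp hz (by norm_num) (by norm_num) (by norm_num)
  have hlt : ‖(1 / 2 : ℝ) • ((y - p) + (y - z))‖ < ‖y - p‖ :=
    (norm_midpoint_lt_iff heq.symm).2 fun h => hne (sub_right_injective h).symm
  have hmid_eq : (1 / 2 : ℝ) • ((y - p) + (y - z)) = y - ((1 / 2 : ℝ) • p + (1 / 2 : ℝ) • z) := by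
    module
  exact (isMinOn_iff.1 hmin _ hmid).not_gt (hmid_eq ▸ hlt)

section ClosestPoints

omit [InnerProductSpace ℝ H]

theorem mem_projS {S : Finset H} {x y : H} :
    x ∈ ProjS S y ↔ x ∈ S ∧ ‖y - x‖ = distS S y :=
  Finset.mem_filter

variable (S : Finset H)

theorem distS_le {x : H} (hx : x ∈ S) (y : H) : distS S y ≤ ‖y - x‖ :=
  csInf_le (S.finite_toSet.image _).bddBelow ⟨x, hx, rfl⟩

theorem projS_nonempty (hS : S.Nonempty) (y : H) : (ProjS S y).Nonempty := by
  obtain ⟨x, hx, hx'⟩ :=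
    ((Finset.coe_nonempty.2 hS).image fun x => ‖y - x‖).csInf_mem (S.finite_toSet.image _)
  exact ⟨x, mem_projS.2 ⟨hx, hx'⟩⟩

variable {S}

theorem neg_half_norm_sub_sq_le_psiFn {x : H} (hx : x ∈ S) (y : H) :
    -(‖y - x‖ ^ 2 / 2) ≤ PsiFn S y :=
  neg_le_neg (csInf_le (S.finite_toSet.image _).bddBelow ⟨x, hx, rfl⟩)

theorem psiFn_eq_of_mem_projS {x y : H} (hx : x ∈ ProjS S y) : PsiFn S y = -(‖y - x‖ ^ 2 / 2) := by
  obtain ⟨hxS, hxd⟩ := mem_projS.1 hx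
  refine le_antisymm (neg_le_neg (le_csInf ⟨_, x, hxS, rfl⟩ ?_))
    (neg_half_norm_sub_sq_le_psiFn hxS y)
  rintro _ ⟨x', hx', rfl⟩
  have h : ‖y - x‖ ≤ ‖y - x'‖ := hxd ▸ distS_le S hx' y
  dsimp only
  gcongr

theorem eventually_projS_subset (y : H) : ∀ᶠ y' in 𝓝 y, ProjS S y' ⊆ ProjS S y := by
  have hfar : ∀ x ∈ S, ∀ᶠ y' in 𝓝 y, x ∉ ProjS S y → x ∉ ProjS S y' := by
    intro x hx
    by_cases hxP : x ∈ ProjS S y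
    · exact Eventually.of_forall fun _ h => (h hxP).elim
    obtain ⟨x₀, hx₀⟩ := projS_nonempty S ⟨x, hx⟩ y
    have hlt : ‖y - x₀‖ < ‖y - x‖ := by
      rw [(mem_projS.1 hx₀).2]
      exact (distS_le S hx y).lt_of_ne fun h => hxP (mem_projS.2 ⟨hx, h.symm⟩)
    filter_upwards [(by fun_prop : Continuous fun y' => ‖y' - x₀‖).continuousAt.eventually_lt
      (by fun_prop : Continuous fun y' => ‖y' - x‖).continuousAt hlt] with y' hy' _ hx'
    exact (distS_le S (mem_projS.1 hx₀).1 y').not_gt ((mem_projS.1 hx').2 ▸ hy')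
  filter_upwards [(S.eventually_all).2 hfar] with y' hy' x hx'
  by_contra hxP
  exact hy' x (mem_projS.1 hx').1 hxP hx'

end ClosestPoints

section Subdifferential

variable {S : Finset H}

theorem psiFn_sub_ge_of_mem_projS {x y : H} (hx : x ∈ ProjS S y) (y' : H) :
    ⟪x - y, y' - y⟫ - ‖y' - y‖ ^ 2 / 2 ≤ PsiFn S y' - PsiFn S y := by
  have := neg_half_norm_sub_sq_le_psiFn (mem_projS.1 hx).1 y'
  rw [psiFn_eq_of_mem_projS hx]
  linarith [norm_sub_sq_eq_norm_sub_sq_sub_inner x y y']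

theorem psiFn_sub_le_of_mem_projS {x y' : H} (hx : x ∈ ProjS S y') (y : H) :
    PsiFn S y' - PsiFn S y ≤ ⟪x - y, y' - y⟫ - ‖y' - y‖ ^ 2 / 2 := by
  have := neg_half_norm_sub_sq_le_psiFn (mem_projS.1 hx).1 y
  rw [psiFn_eq_of_mem_projS hx]
  linarith [norm_sub_sq_eq_norm_sub_sq_sub_inner x y y']

theorem psiFn_sub_ge_of_mem_convexHull {y z : H} (hz : z ∈ convexHull ℝ ↑(ProjS S y)) (y' : H) :
    ⟪z - y, y' - y⟫ - ‖y' - y‖ ^ 2 / 2 ≤ PsiFn S y' - PsiFn S y := by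
  have hlin : ConvexOn ℝ Set.univ fun v => ⟪y' - y, v⟫ :=
    (innerSL ℝ (y' - y)).toLinearMap.convexOn convex_univ
  obtain ⟨x, hx, hle⟩ := hlin.exists_ge_of_mem_convexHull (Set.subset_univ _) hz
  have hzx : ⟪z - y, y' - y⟫ ≤ ⟪x - y, y' - y⟫ := by
    rw [inner_sub_left, inner_sub_left, real_inner_comm (y' - y) z, real_inner_comm (y' - y) x]
    linarith
  linarith [psiFn_sub_ge_of_mem_projS hx y']

theorem abs_psiFn_sub_sub_inner_le (hS : S.Nonempty) {y : H} {R : ℝ} (hR : ∀ x ∈ S, ‖x - y‖ ≤ R)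
    (ζ y' : H) :
    |PsiFn S y' - PsiFn S y - ⟪ζ, y' - y⟫| ≤ (R + ‖ζ‖ + ‖y' - y‖ / 2) * ‖y' - y‖ := by
  obtain ⟨x₀, hx₀⟩ := projS_nonempty S hS y
  obtain ⟨x', hx'⟩ := projS_nonempty S hS y'
  have hx₀R := hR x₀ (mem_projS.1 hx₀).1
  have hx'R := hR x' (mem_projS.1 hx').1
  have hζ := abs_real_inner_le_norm ζ (y' - y)
  have h₀ := abs_real_inner_le_norm (x₀ - y) (y' - y)
  have h' := abs_real_inner_le_norm (x' - y) (y' - y)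
  have hh := norm_nonneg (y' - y)
  rw [abs_le] at hζ h₀ h' ⊢
  constructor
  · nlinarith [psiFn_sub_ge_of_mem_projS hx₀ y']
  · nlinarith [psiFn_sub_le_of_mem_projS hx' y]


def psiQuot (S : Finset H) (y ζ y' : H) : ℝ :=
  (PsiFn S y' - PsiFn S y - ⟪ζ, y' - y⟫) / ‖y' - y‖

theorem mem_subdiff_iff {y ζ : H} : ζ ∈ subdiff S y ↔ 0 ≤ liminf (psiQuot S y ζ) (𝓝[≠] y) :=
  Iff.rfl

-- A real `liminf` is a junk value unless the function is bounded on both sides along the filter.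
theorem isBoundedUnder_abs_psiQuot (hS : S.Nonempty) (y ζ : H) :
    IsBoundedUnder (· ≤ ·) (𝓝[≠] y) fun y' => |psiQuot S y ζ y'| := by
  obtain ⟨R, hR⟩ : ∃ R, ∀ x ∈ S, ‖x - y‖ ≤ R :=
    ⟨S.sup' hS (‖· - y‖), fun x hx => S.le_sup' (‖· - y‖) hx⟩
  refine isBoundedUnder_of_eventually_le (a := R + ‖ζ‖ + 1) ?_
  filter_upwards [self_mem_nhdsWithin, nhdsWithin_le_nhds (Metric.ball_mem_nhds y one_pos)]
    with y' hne hball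
  rw [Metric.mem_ball, dist_eq_norm] at hball
  rw [psiQuot, abs_div, abs_norm, div_le_iff₀ (norm_pos_iff.2 (sub_ne_zero.2 hne))]
  calc _ ≤ (R + ‖ζ‖ + ‖y' - y‖ / 2) * ‖y' - y‖ := abs_psiFn_sub_sub_inner_le hS hR ζ y'
    _ ≤ (R + ‖ζ‖ + 1) * ‖y' - y‖ := by gcongr; linarith

theorem sub_mem_subdiff_of_mem_convexHull [Nontrivial H] (hS : S.Nonempty) {y z : H}
    (hz : z ∈ convexHull ℝ ↑(ProjS S y)) : z - y ∈ subdiff S y := by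
  have hbdd := (isBoundedUnder_le_abs.1 (isBoundedUnder_abs_psiQuot hS y (z - y))).1
  refine le_of_forall_lt_imp_le_of_dense fun c hc => le_liminf_of_le hbdd.isCoboundedUnder_ge ?_
  filter_upwards [self_mem_nhdsWithin,
    nhdsWithin_le_nhds (Metric.ball_mem_nhds y (by linarith : 0 < -2 * c))] with y' hne hball
  rw [Metric.mem_ball, dist_eq_norm] at hball
  have hpos : 0 < ‖y' - y‖ := norm_pos_iff.2 (sub_ne_zero.2 hne)
  rw [psiQuot, le_div_iff₀ hpos]
  nlinarith [psiFn_sub_ge_of_mem_convexHull hz y']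

theorem notMem_subdiff_of_forall_inner_le (hS : S.Nonempty) {y ζ d : H} (hd : d ≠ 0)
    (h : ∀ x ∈ ProjS S y, ⟪x - y - ζ, d⟫ ≤ -‖d‖ ^ 2) : ζ ∉ subdiff S y := by
  have hray : Tendsto (fun t : ℝ => y + t • d) (𝓝[>] 0) (𝓝[≠] y) := by
    refine tendsto_nhdsWithin_of_tendsto_nhds_of_eventually_within _ ?_ ?_
    · have : Tendsto (fun t : ℝ => y + t • d) (𝓝 0) (𝓝 (y + (0 : ℝ) • d)) :=
        (by fun_prop : Continuous fun t : ℝ => y + t • d).tendsto 0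
      simpa using this.mono_left nhdsWithin_le_nhds
    · filter_upwards [self_mem_nhdsWithin] with t ht
      simpa [hd] using ht.ne'
  have hquot : ∀ᶠ t in 𝓝[>] (0 : ℝ), psiQuot S y ζ (y + t • d) ≤ -‖d‖ := by
    filter_upwards [self_mem_nhdsWithin,
      (hray.mono_right nhdsWithin_le_nhds).eventually (eventually_projS_subset y)]
      with t (ht : 0 < t) hsub
    obtain ⟨x, hx⟩ := projS_nonempty S hS (y + t • d)
    have hle := psiFn_sub_le_of_mem_projS hx y
    have hxd := h x (hsub hx)
    rw [add_sub_cancel_left, real_inner_smul_right] at hle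
    rw [inner_sub_left] at hxd
    rw [psiQuot, add_sub_cancel_left, real_inner_smul_right, norm_smul, Real.norm_of_nonneg ht.le,
      div_le_iff₀ (by positivity)]
    nlinarith [mul_le_mul_of_nonneg_left hxd ht.le, sq_nonneg ‖t • d‖]
  have hbdd := (isBoundedUnder_le_abs.1 (isBoundedUnder_abs_psiQuot hS y ζ)).2
  intro hζ
  have hlim := liminf_le_of_frequently_le (hray.frequently hquot.frequently) hbdd
  linarith [mem_subdiff_iff.1 hζ, norm_pos_iff.2 hd]

theorem subdiff_subset (hS : S.Nonempty) (y : H) :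
    subdiff S y ⊆ (· - y) '' convexHull ℝ ↑(ProjS S y) := by
  intro ζ hζ
  by_contra hout
  have hyζ : y + ζ ∉ convexHull ℝ ↑(ProjS S y) := fun h => hout ⟨y + ζ, h, add_sub_cancel_left y ζ⟩
  obtain ⟨d, hd, hsep⟩ := (convex_convexHull ℝ _).exists_ne_zero_inner_sub_le_neg_norm_sq
    (Finset.coe_nonempty.2 (projS_nonempty S hS y)).convexHull
    ((ProjS S y).finite_toSet.isCompact_convexHull ℝ).isComplete hyζ
  exact notMem_subdiff_of_forall_inner_le hS hd
    (fun x hx => sub_sub x y ζ ▸ hsep x (subset_convexHull ℝ _ hx)) hζ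

theorem subdiff_eq [Nontrivial H] (hS : S.Nonempty) (y : H) :
    subdiff S y = (· - y) '' convexHull ℝ ↑(ProjS S y) :=
  (subdiff_subset hS y).antisymm <| by
    rintro _ ⟨z, hz, rfl⟩
    exact sub_mem_subdiff_of_mem_convexHull hS hz

end Subdifferential

theorem statement13_general (r : ℝ) (hr : 0 < r)
    (S : Finset H) (hS : S.Nonempty) (hnorm : ∀ x ∈ S, ‖x‖ = r) (y : H) :
    subdiff S y = (fun z => z - y) '' (convexHull ℝ ↑(ProjS S y))
      ∧ ∀ p : H, p ∈ convexHull ℝ (↑(ProjS S y) : Set H) →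
          (∀ z ∈ convexHull ℝ (↑(ProjS S y) : Set H), ‖y - p‖ ≤ ‖y - z‖) →
          (p - y ∈ subdiff S y
            ∧ (∀ ζ ∈ subdiff S y, ‖p - y‖ ≤ ‖ζ‖)
            ∧ ∀ ζ ∈ subdiff S y, ‖ζ‖ = ‖p - y‖ → ζ = p - y) := by
  obtain ⟨x, hx⟩ := hS
  have : Nontrivial H :=
    nontrivial_of_ne x 0 (norm_ne_zero_iff.1 (by rw [hnorm x hx]; exact hr.ne'))
  have heq := subdiff_eq ⟨x, hx⟩ y
  refine ⟨heq, fun p hp hmin => ⟨heq ▸ ⟨p, hp, rfl⟩, ?_, ?_⟩⟩ <;> rw [heq]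
  · rintro _ ⟨z, hz, rfl⟩
    simpa only [norm_sub_rev] using hmin z hz
  · rintro _ ⟨z, hz, rfl⟩ hzp
    rw [(convex_convexHull ℝ _).eq_of_isMinOn_norm_sub hp (isMinOn_iff.2 hmin) hz
      (by simpa only [norm_sub_rev] using hzp)]

/-- Proposition C.3 of the paper. Let `H` be a real Hilbert space and `S` a
finite nonempty subset of the sphere of radius `r > 0` centered at the origin. Then the local
subdifferential of `Ψ(y) = −min_{x∈S}‖y−x‖²/2` at `y` equals
`{z − y : z ∈ conv(Proj_S(y))}`, and its unique element of minimal norm is `p − y`, where `p`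
is the unique point of `conv(Proj_S(y))` closest to `y`. -/
theorem statement13 [CompleteSpace H] (r : ℝ) (hr : 0 < r)
    (S : Finset H) (hS : S.Nonempty) (hnorm : ∀ x ∈ S, ‖x‖ = r) (y : H) :
    subdiff S y = (fun z => z - y) '' (convexHull ℝ ↑(ProjS S y))
      ∧ ∀ p : H, p ∈ convexHull ℝ (↑(ProjS S y) : Set H) →
          (∀ z ∈ convexHull ℝ (↑(ProjS S y) : Set H), ‖y - p‖ ≤ ‖y - z‖) →
          (p - y ∈ subdiff S y
            ∧ (∀ ζ ∈ subdiff S y, ‖p - y‖ ≤ ‖ζ‖)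
            ∧ ∀ ζ ∈ subdiff S y, ‖ζ‖ = ‖p - y‖ → ζ = p - y) :=
  statement13_general r hr S hS hnorm y

end
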